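/- Let (κ_n) and (v_n) be sequences with κ_n ≥ 0 and v_n > 0 for all n, and set d1_n := −κ_n/v_n + v_n/2. If d1_n → −∞ as n → ∞, then C_BS(κ_n, v_n) ~ φ(d1_n) · v_n / ((−d1_n)(−d1_n + v_n)), i.e. the ratio of the two sides tends to 1. -/

import Mathlib

/-
Substituting `t = d₁ - s` in both normal distribution functions and using `κ = v²/2 - v d₁`,
`C_BS(κ, v) = φ(d₁) ∫₀^∞ e^{-s²/2} (e^{d₁ s} - e^{(d₁ - v) s}) ds`. Bounding the Gaussian factor
by `1 - s²/2 ≤ e^{-s²/2} ≤ 1` squeezes the integral between `(1 - 3/d₁²) · q` and `q`, where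
`q = ∫₀^∞ (e^{d₁ s} - e^{(d₁ - v) s}) ds = v / ((-d₁)(-d₁ + v))`; as `d₁ → -∞` the ratio tends to 1.
-/

open MeasureTheory Filter Topology

/-- Standard normal density `φ(z) = e^{-z²/2}/√(2π)`. -/
noncomputable def stdPDF (z : ℝ) : ℝ := Real.exp (-(z^2)/2) / Real.sqrt (2*Real.pi)

/-- Standard normal distribution function `Φ(z) = ∫_{-∞}^z φ(t) dt`. -/
noncomputable def stdCDF (z : ℝ) : ℝ := ∫ t in Set.Iic z, stdPDF t

/-- Black–Scholes call price `C_BS(κ,v) = Φ(d1) - e^κ Φ(d2)` with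
`d1 = -κ/v + v/2`, `d2 = -κ/v - v/2`. -/
noncomputable def CBS (κ v : ℝ) : ℝ :=
  stdCDF (-κ/v + v/2) - Real.exp κ * stdCDF (-κ/v - v/2)

open Set Real
open scoped Nat

lemma setIntegral_Iic_eq_setIntegral_Ioi_sub (f : ℝ → ℝ) (z : ℝ) :
    ∫ t in Iic z, f t = ∫ s in Ioi 0, f (z - s) := by
  have hemb : MeasurableEmbedding (fun s : ℝ => z - s) :=
    (Homeomorph.subLeft z).measurableEmbedding
  have himg : (fun s : ℝ => z - s) '' Ioi 0 = Iio z := by simp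
  rw [integral_Iic_eq_integral_Iio, ← himg,
    (Measure.measurePreserving_sub_left volume z).setIntegral_image_emb hemb]

lemma stdPDF_pos (z : ℝ) : 0 < stdPDF z := by
  unfold stdPDF
  positivity

lemma integrable_stdPDF : Integrable stdPDF := by
  have h := (integrable_exp_neg_mul_sq one_half_pos).div_const (sqrt (2 * π))
  refine h.congr (ae_of_all _ fun t => ?_)
  simp only [stdPDF]
  ring_nf

lemma stdPDF_sub (z s : ℝ) :
    stdPDF (z - s) = stdPDF z * (exp (-(s^2)/2) * exp (z * s)) := by
  simp only [stdPDF, ← exp_add, div_mul_eq_mul_div]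
  ring_nf

lemma stdCDF_eq_setIntegral_Ioi (z : ℝ) : stdCDF z = ∫ s in Ioi 0, stdPDF (z - s) :=
  setIntegral_Iic_eq_setIntegral_Ioi_sub stdPDF z

lemma integrable_stdPDF_sub (z : ℝ) : Integrable (fun s => stdPDF (z - s)) :=
  integrable_stdPDF.comp_sub_left z

lemma CBS_eq_stdPDF_mul_setIntegral {v : ℝ} (hv : v ≠ 0) (d : ℝ) :
    CBS (v^2/2 - v*d) v =
      stdPDF d * ∫ s in Ioi 0, exp (-(s^2)/2) * (exp (d*s) - exp ((d - v)*s)) := by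
  have hd1 : -(v^2/2 - v*d)/v + v/2 = d := by field_simp; ring
  have hd2 : -(v^2/2 - v*d)/v - v/2 = d - v := by field_simp; ring
  rw [CBS, hd1, hd2, stdCDF_eq_setIntegral_Ioi, stdCDF_eq_setIntegral_Ioi,
    ← integral_const_mul, ← integral_sub (integrable_stdPDF_sub d).integrableOn
      ((integrable_stdPDF_sub (d - v)).const_mul _).integrableOn, ← integral_const_mul]
  refine setIntegral_congr_fun measurableSet_Ioi fun s _ => ?_
  have hexp : exp (v^2/2 - v*d) * (exp (-((v + s)^2)/2) * exp (d * (v + s)))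
      = exp (-(s^2)/2) * exp ((d - v) * s) := by
    simp only [← exp_add]
    ring_nf
  rw [stdPDF_sub d s, show d - v - s = d - (v + s) by ring, stdPDF_sub d (v + s)]
  linear_combination (-stdPDF d) * hexp

lemma integral_pow_mul_exp_mul_Ioi (n : ℕ) {c : ℝ} (hc : c < 0) :
    ∫ s in Ioi 0, s^n * exp (c*s) = n ! / (-c)^(n+1) := by
  have h := integral_rpow_mul_exp_neg_mul_Ioi (a := n + 1) (by positivity) (neg_pos.2 hc)
  rw [Gamma_nat_eq_factorial, add_sub_cancel_right, ← Nat.cast_succ, rpow_natCast] at h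
  simp only [rpow_natCast, neg_mul, neg_neg] at h
  rw [h, one_div, inv_pow, inv_mul_eq_div]

lemma integrableOn_pow_mul_exp_mul_Ioi (n : ℕ) {c : ℝ} (hc : c < 0) :
    IntegrableOn (fun s => s^n * exp (c*s)) (Ioi 0) := by
  refine Integrable.of_integral_ne_zero ?_
  rw [integral_pow_mul_exp_mul_Ioi n hc]
  have := neg_pos.2 hc
  positivity

lemma sub_inv_pow_three_le {a b : ℝ} (ha : 0 < a) (hab : a ≤ b) :
    1/a^3 - 1/b^3 ≤ 3/a^2 * (1/a - 1/b) := by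
  have hx : 1/b ≤ 1/a := one_div_le_one_div_of_le ha hab
  have hy : 0 < 1/b := one_div_pos.2 (ha.trans_le hab)
  have e1 : 1/a^3 = (1/a)^3 := by ring
  have e2 : 1/b^3 = (1/b)^3 := by ring
  have e3 : 3/a^2 = 3 * (1/a)^2 := by ring
  rw [e1, e2, e3]
  have h2xy : 0 ≤ 2 * (1/a) + 1/b := by positivity
  nlinarith [mul_nonneg (sub_nonneg.2 hx) (mul_nonneg (sub_nonneg.2 hx) h2xy)]

section GaussianLaplace

variable {d v : ℝ}

lemma exp_mul_sub_exp_mul_nonneg (hv : 0 ≤ v) {s : ℝ} (hs : 0 ≤ s) :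
    0 ≤ exp (d*s) - exp ((d - v)*s) :=
  sub_nonneg.2 (exp_le_exp.2 (by nlinarith))

variable (hd : d < 0) (hv : 0 ≤ v)
include hd hv

lemma integrableOn_pow_mul_exp_mul_sub_exp_mul (n : ℕ) :
    IntegrableOn (fun s => s^n * (exp (d*s) - exp ((d - v)*s))) (Ioi 0) := by
  simp_rw [mul_sub]
  exact (integrableOn_pow_mul_exp_mul_Ioi n hd).sub
    (integrableOn_pow_mul_exp_mul_Ioi n (by linarith))

lemma integral_pow_mul_exp_mul_sub_exp_mul (n : ℕ) :
    ∫ s in Ioi 0, s^n * (exp (d*s) - exp ((d - v)*s)) =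
      n ! * (1/(-d)^(n+1) - 1/(v - d)^(n+1)) := by
  simp_rw [mul_sub]
  rw [integral_sub (integrableOn_pow_mul_exp_mul_Ioi n hd)
    (integrableOn_pow_mul_exp_mul_Ioi n (by linarith)), integral_pow_mul_exp_mul_Ioi n hd,
    integral_pow_mul_exp_mul_Ioi n (by linarith), neg_sub]
  ring

lemma integrableOn_exp_neg_sq_mul_exp_mul_sub_exp_mul :
    IntegrableOn (fun s => exp (-(s^2)/2) * (exp (d*s) - exp ((d - v)*s))) (Ioi 0) := by
  have hkernel := integrableOn_pow_mul_exp_mul_sub_exp_mul hd hv 0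
  simp only [pow_zero, one_mul] at hkernel
  refine Integrable.mono' hkernel (by fun_prop)
    ((ae_restrict_iff' measurableSet_Ioi).2 (ae_of_all _ fun s hs => ?_))
  have hg := exp_mul_sub_exp_mul_nonneg (d := d) hv (le_of_lt hs)
  rw [norm_mul, norm_of_nonneg (exp_pos _).le, norm_of_nonneg hg]
  exact mul_le_of_le_one_left hg (exp_le_one_iff.2 (by nlinarith))

lemma div_mul_neg_add_eq_one_div_sub :
    v / ((-d) * (-d + v)) = 1/(-d) - 1/(v - d) := by
  have h₁ : -d ≠ 0 := by linarith
  have h₂ : v - d ≠ 0 := by linarith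
  rw [div_sub_div _ _ h₁ h₂, div_eq_div_iff (mul_ne_zero h₁ (by linarith)) (mul_ne_zero h₁ h₂)]
  ring

lemma setIntegral_exp_neg_sq_mul_le :
    ∫ s in Ioi 0, exp (-(s^2)/2) * (exp (d*s) - exp ((d - v)*s)) ≤ v / ((-d) * (-d + v)) := by
  calc ∫ s in Ioi 0, exp (-(s^2)/2) * (exp (d*s) - exp ((d - v)*s))
      ≤ ∫ s in Ioi 0, s^0 * (exp (d*s) - exp ((d - v)*s)) := by
        refine setIntegral_mono_on (integrableOn_exp_neg_sq_mul_exp_mul_sub_exp_mul hd hv)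
          (integrableOn_pow_mul_exp_mul_sub_exp_mul hd hv 0) measurableSet_Ioi fun s hs => ?_
        rw [pow_zero, one_mul]
        exact mul_le_of_le_one_left (exp_mul_sub_exp_mul_nonneg hv (le_of_lt hs))
          (exp_le_one_iff.2 (by nlinarith))
    _ = v / ((-d) * (-d + v)) := by
        rw [integral_pow_mul_exp_mul_sub_exp_mul hd hv, div_mul_neg_add_eq_one_div_sub hd hv]
        simp

/- With `e^{-s²/2} ≥ 1 - s²/2` the loss is half the second moment `2 (1/(-d)³ - 1/(v-d)³)`,
which is at most `3/d²` times the main term. -/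
lemma le_setIntegral_exp_neg_sq_mul :
    (1 - 3/d^2) * (v / ((-d) * (-d + v))) ≤
      ∫ s in Ioi 0, exp (-(s^2)/2) * (exp (d*s) - exp ((d - v)*s)) := by
  have hmoment := sub_inv_pow_three_le (a := -d) (b := v - d) (by linarith) (by linarith)
  calc (1 - 3/d^2) * (v / ((-d) * (-d + v)))
      ≤ (1/(-d) - 1/(v - d)) - (1/(-d)^3 - 1/(v - d)^3) := by
        rw [div_mul_neg_add_eq_one_div_sub hd hv, show d^2 = (-d)^2 by ring]
        linarith
    _ = ∫ s in Ioi 0, (s^0 * (exp (d*s) - exp ((d - v)*s))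
          - 1/2 * (s^2 * (exp (d*s) - exp ((d - v)*s)))) := by
        rw [integral_sub (integrableOn_pow_mul_exp_mul_sub_exp_mul hd hv 0)
          ((integrableOn_pow_mul_exp_mul_sub_exp_mul hd hv 2).const_mul _), integral_const_mul,
          integral_pow_mul_exp_mul_sub_exp_mul hd hv, integral_pow_mul_exp_mul_sub_exp_mul hd hv]
        norm_num
        ring
    _ ≤ ∫ s in Ioi 0, exp (-(s^2)/2) * (exp (d*s) - exp ((d - v)*s)) := by
        refine setIntegral_mono_on (((integrableOn_pow_mul_exp_mul_sub_exp_mul hd hv 0).sub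
          ((integrableOn_pow_mul_exp_mul_sub_exp_mul hd hv 2).const_mul _)))
          (integrableOn_exp_neg_sq_mul_exp_mul_sub_exp_mul hd hv) measurableSet_Ioi fun s hs => ?_
        have hg := exp_mul_sub_exp_mul_nonneg (d := d) hv (le_of_lt hs)
        have hexp : 1 - s^2/2 ≤ exp (-(s^2)/2) := by linarith [add_one_le_exp (-(s^2)/2)]
        nlinarith

end GaussianLaplace

theorem CBS_asymptotics_d1_to_neg_infty_general
    (κ v : ℕ → ℝ) (hv : ∀ n, 0 < v n)
    (d1 : ℕ → ℝ) (hd1 : ∀ n, d1 n = -(κ n) / v n + v n / 2)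
    (hbot : Tendsto d1 atTop atBot) :
    Tendsto (fun n => CBS (κ n) (v n) /
        (stdPDF (d1 n) * (v n / ((-(d1 n)) * (-(d1 n) + v n)))))
      atTop (𝓝 1) := by
  have hκ n : κ n = v n ^ 2 / 2 - v n * d1 n := by
    rw [hd1]
    field_simp [(hv n).ne']
    ring
  have hratio n : CBS (κ n) (v n) / (stdPDF (d1 n) * (v n / ((-(d1 n)) * (-(d1 n) + v n)))) =
      (∫ s in Ioi 0, exp (-(s^2)/2) * (exp (d1 n * s) - exp ((d1 n - v n) * s))) /
        (v n / ((-(d1 n)) * (-(d1 n) + v n))) := by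
    rw [hκ, CBS_eq_stdPDF_mul_setIntegral (hv n).ne', mul_div_mul_left _ _ (stdPDF_pos _).ne']
  have hsq : Tendsto (fun n => d1 n ^ 2) atTop atTop :=
    (tendsto_pow_atTop two_ne_zero).comp (tendsto_neg_atBot_atTop.comp hbot) |>.congr
      fun n => by simp
  have hlower : Tendsto (fun n => 1 - 3 / d1 n ^ 2) atTop (𝓝 1) := by
    simpa using tendsto_const_nhds.sub (tendsto_const_nhds.div_atTop hsq)
  simp_rw [hratio]
  refine tendsto_of_tendsto_of_tendsto_of_le_of_le' hlower tendsto_const_nhds ?_ ?_ <;>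
    filter_upwards [hbot.eventually_lt_atBot 0] with n hn
  · exact (le_div_iff₀ (div_pos (hv n) (mul_pos (neg_pos.2 hn) (by linarith [hv n])))).2
      (le_setIntegral_exp_neg_sq_mul hn (hv n).le)
  · exact (div_le_one (div_pos (hv n) (mul_pos (neg_pos.2 hn) (by linarith [hv n])))).2
      (setIntegral_exp_neg_sq_mul_le hn (hv n).le)

/-- **Black–Scholes asymptotics when `d1 → -∞`.** For `κ n ≥ 0`, `v n > 0`, with
`d1_n = -κ n/v n + v n/2 → -∞`, one has
`C_BS(κ n, v n) ~ φ(d1_n) · v n / ((-d1_n)(-d1_n + v n))`. -/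
theorem CBS_asymptotics_d1_to_neg_infty
    (κ v : ℕ → ℝ) (hκ : ∀ n, 0 ≤ κ n) (hv : ∀ n, 0 < v n)
    (d1 : ℕ → ℝ) (hd1 : ∀ n, d1 n = -(κ n) / v n + v n / 2)
    (hbot : Tendsto d1 atTop atBot) :
    Tendsto (fun n => CBS (κ n) (v n) /
        (stdPDF (d1 n) * (v n / ((-(d1 n)) * (-(d1 n) + v n)))))
      atTop (𝓝 1) :=
  CBS_asymptotics_d1_to_neg_infty_general κ v hv d1 hd1 hbot
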